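/- Let A : ℝⁿ → ℝᵐ be linear, λ > 0, L̃ > 0, and for t ≥ 1 set α_t = 2/(t+1) and γ_t = 4L̃/(t(t+1)). Fix y⁰ ∈ ℝᵐ. Call a point y' AC-SA-reachable from z⁰ relative to points ŷ¹, …, ŷʲ ∈ ℝᵐ if y' = y^m_ag for some m ≥ 0, where y⁰_ag = y⁰_md = z⁰ and for t = 1,…,m: y^t_md = ((1−α_t)(λ+γ_t)/(γ_t + (1−α_t²)λ))·y^{t−1}_ag + (α_t((1−α_t)λ+γ_t)/(γ_t + (1−α_t²)λ))·z^{t−1}; z^t = (α_tλ/(λ+γ_t))·y^t_md + (((1−α_t)λ+γ_t)/(λ+γ_t))·z^{t−1} − (α_t/(λ+γ_t))·(A v^t + λ(y^t_md − y⁰) + λΣ_{l=1}^{j} 2^l(y^t_md − ŷ^l)) for some v^t ∈ ℝⁿ; y^t_ag = α_t z^t + (1−α_t)y^{t−1}_ag. Suppose ŷ⁰ = y⁰ and, for each k ≥ 1, ŷᵏ is obtained from ŷ^{k−1} by finitely many consecutive such AC-SA trajectories relative to ŷ¹, …, ŷ^{k−1} (each trajectory starting where the previous one ended). Then ŷᵏ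 ∈ y⁰ + (Ker Aᵀ)^⊥ for every k ≥ 0. -/

import Mathlib

open Finset

/-- `ACSAReachable A lam Lt y0 yh j z0 y'` means that `y'` is the aggregate iterate `y^m_ag`
of some AC-SA trajectory of some length `m` started at `z0`, applied to the regularized dual
objective built from the base point `y0` and the prox centers `yh 1, …, yh j`; the stochastic
gradient at step `t` has the form `A v^t + λ(y^t_md − y⁰) + λ Σ_{l=1}^j 2^l (y^t_md − ŷ^l)`. -/
def ACSAReachable {n d : ℕ}
    (A : EuclideanSpace ℝ (Fin n) →ₗ[ℝ] EuclideanSpace ℝ (Fin d))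
    (lam Lt : ℝ) (y0 : EuclideanSpace ℝ (Fin d)) (yh : ℕ → EuclideanSpace ℝ (Fin d))
    (j : ℕ) (z0 y' : EuclideanSpace ℝ (Fin d)) : Prop :=
  ∃ (m : ℕ) (ymd z yag : ℕ → EuclideanSpace ℝ (Fin d)) (v : ℕ → EuclideanSpace ℝ (Fin n)),
    ymd 0 = z0 ∧ yag 0 = z0 ∧ z 0 = z0 ∧
    (∀ t < m,
      (fun (αt γt : ℝ) =>
        ymd (t + 1) =
          ((1 - αt) * (lam + γt) / (γt + (1 - αt ^ 2) * lam)) • yag t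
            + (αt * ((1 - αt) * lam + γt) / (γt + (1 - αt ^ 2) * lam)) • z t ∧
        z (t + 1) =
          (αt * lam / (lam + γt)) • ymd (t + 1)
            + (((1 - αt) * lam + γt) / (lam + γt)) • z t
            - (αt / (lam + γt)) •
                (A (v (t + 1)) + lam • (ymd (t + 1) - y0)
                  + lam • ∑ l ∈ Icc 1 j, (2 : ℝ) ^ l • (ymd (t + 1) - yh l)) ∧
        yag (t + 1) = αt • z (t + 1) + (1 - αt) • yag t)
      (2 / ((t : ℝ) + 2)) (4 * Lt / (((t : ℝ) + 1) * ((t : ℝ) + 2)))) ∧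
    y' = yag m

/-! Let `S = (Ker Aᵀ)^⊥`, which contains the range of `A`. Each AC-SA update forms `y_md`, `z`,
`y_ag` as combinations of previous iterates whose weights sum to one, minus (for `z`) a multiple
of a stochastic gradient `A v + λ(y_md − y⁰) + λ Σ 2^l (y_md − ŷ^l)`, which lies in `S` as soon as
`y_md` and the `ŷ^l` lie in `y⁰ + S`. The weights do sum to one because their denominators are
positive, as `λ > 0`, `L̃ > 0` and `α_t ≤ 1`. Hence the affine subspace `y⁰ + S` is invariant
along every trajectory, and by strong induction on `k` it contains all `ŷᵏ`. -/

lemma Submodule.smul_add_smul_sub_mem {E : Type*} [AddCommGroup E] [Module ℝ E]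
    (S : Submodule ℝ E) {p x y : E} {a b : ℝ} (hab : a + b = 1)
    (hx : x - p ∈ S) (hy : y - p ∈ S) : a • x + b • y - p ∈ S := by
  have h : a • x + b • y - p = a • (x - p) + b • (y - p) := by
    obtain rfl : b = 1 - a := by linarith
    module
  rw [h]
  exact S.add_mem (S.smul_mem a hx) (S.smul_mem b hy)

lemma LinearMap.mem_orthogonal_ker_adjoint {𝕜 E F : Type*} [RCLike 𝕜]
    [NormedAddCommGroup E] [InnerProductSpace 𝕜 E] [FiniteDimensional 𝕜 E]
    [NormedAddCommGroup F] [InnerProductSpace 𝕜 F] [FiniteDimensional 𝕜 F]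
    (A : E →ₗ[𝕜] F) (v : E) : A v ∈ (ker A.adjoint)ᗮ := by
  rw [← orthogonal_range]
  exact Submodule.le_orthogonal_orthogonal _ (mem_range_self A v)

lemma acsa_md_weights_add_eq_one {lam α γ : ℝ} (hD : γ + (1 - α ^ 2) * lam ≠ 0) :
    (1 - α) * (lam + γ) / (γ + (1 - α ^ 2) * lam)
      + α * ((1 - α) * lam + γ) / (γ + (1 - α ^ 2) * lam) = 1 := by
  rw [← add_div, div_eq_one_iff_eq hD]
  ring

lemma acsa_z_weights_add_eq_one {lam α γ : ℝ} (hD : lam + γ ≠ 0) :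
    α * lam / (lam + γ) + ((1 - α) * lam + γ) / (lam + γ) = 1 := by
  rw [← add_div, div_eq_one_iff_eq hD]
  ring

lemma acsa_denominators_ne_zero {lam Lt : ℝ} (hlam : 0 < lam) (hLt : 0 < Lt) (t : ℕ) :
    lam + 4 * Lt / (((t : ℝ) + 1) * ((t : ℝ) + 2)) ≠ 0 ∧
      4 * Lt / (((t : ℝ) + 1) * ((t : ℝ) + 2)) + (1 - (2 / ((t : ℝ) + 2)) ^ 2) * lam ≠ 0 := by
  have hγ : 0 < 4 * Lt / (((t : ℝ) + 1) * ((t : ℝ) + 2)) := by positivity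
  have hα : 2 / ((t : ℝ) + 2) ≤ 1 :=
    (div_le_one (by positivity)).mpr (by linarith [t.cast_nonneg (α := ℝ)])
  have hα2 : (2 / ((t : ℝ) + 2)) ^ 2 ≤ 1 := pow_le_one₀ (by positivity) hα
  constructor <;> nlinarith

section Invariance

variable {n d : ℕ} {A : EuclideanSpace ℝ (Fin n) →ₗ[ℝ] EuclideanSpace ℝ (Fin d)} {lam Lt : ℝ}
  {y0 : EuclideanSpace ℝ (Fin d)} {yh : ℕ → EuclideanSpace ℝ (Fin d)} {j : ℕ}
  {S : Submodule ℝ (EuclideanSpace ℝ (Fin d))}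

lemma ACSAReachable.sub_mem (hlam : 0 < lam) (hLt : 0 < Lt) (hA : ∀ v, A v ∈ S)
    (hyh : ∀ l ∈ Icc 1 j, yh l - y0 ∈ S) {z0 y' : EuclideanSpace ℝ (Fin d)}
    (h : ACSAReachable A lam Lt y0 yh j z0 y') (hz0 : z0 - y0 ∈ S) : y' - y0 ∈ S := by
  obtain ⟨m, ymd, z, yag, v, hmd0, hag0, hz00, hstep, rfl⟩ := h
  suffices ∀ t ≤ m, z t - y0 ∈ S ∧ yag t - y0 ∈ S from (this m le_rfl).2
  intro t ht
  induction t with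
  | zero => rw [hz00, hag0]; exact ⟨hz0, hz0⟩
  | succ t ih =>
    obtain ⟨ihz, ihag⟩ := ih (by omega)
    obtain ⟨hmd_eq, hz_eq, hag_eq⟩ := hstep t (by omega)
    obtain ⟨hzD, hmdD⟩ := acsa_denominators_ne_zero hlam hLt t
    have hmd : ymd (t + 1) - y0 ∈ S := by
      rw [hmd_eq]
      exact S.smul_add_smul_sub_mem (acsa_md_weights_add_eq_one hmdD) ihag ihz
    have hgrad : A (v (t + 1)) + lam • (ymd (t + 1) - y0)
        + lam • ∑ l ∈ Icc 1 j, (2 : ℝ) ^ l • (ymd (t + 1) - yh l) ∈ S := by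
      refine S.add_mem (S.add_mem (hA _) (S.smul_mem _ hmd)) (S.smul_mem _ ?_)
      refine S.sum_mem fun l hl => S.smul_mem _ ?_
      rw [← sub_sub_sub_cancel_right _ _ y0]
      exact S.sub_mem hmd (hyh l hl)
    have hz : z (t + 1) - y0 ∈ S := by
      rw [hz_eq, sub_right_comm]
      exact S.sub_mem (S.smul_add_smul_sub_mem (acsa_z_weights_add_eq_one hzD) hmd ihz)
        (S.smul_mem _ hgrad)
    refine ⟨hz, ?_⟩
    rw [hag_eq]
    exact S.smul_add_smul_sub_mem (by ring) hz ihag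

lemma ACSAReachable.sub_mem_of_reflTransGen (hlam : 0 < lam) (hLt : 0 < Lt) (hA : ∀ v, A v ∈ S)
    (hyh : ∀ l ∈ Icc 1 j, yh l - y0 ∈ S) {z0 y' : EuclideanSpace ℝ (Fin d)}
    (h : Relation.ReflTransGen (ACSAReachable A lam Lt y0 yh j) z0 y') (hz0 : z0 - y0 ∈ S) :
    y' - y0 ∈ S := by
  induction h with
  | refl => exact hz0
  | tail _ hstep ih => exact hstep.sub_mem hlam hLt hA hyh ih

end Invariance

/-- Corollary 5.5: the points `ŷᵏ` produced by the RRMA-AC-SA² meta-algorithm — each obtained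
from the previous one by finitely many consecutive AC-SA trajectories relative to the prox
centers `ŷ¹,…,ŷ^{k-1}` — all lie in the affine subspace `y⁰ + (Ker Aᵀ)^⊥`. -/
theorem rrma_ac_sa_iterates_in_affine_subspace {n d : ℕ}
    (A : EuclideanSpace ℝ (Fin n) →ₗ[ℝ] EuclideanSpace ℝ (Fin d))
    (lam Lt : ℝ) (hlam : 0 < lam) (hLt : 0 < Lt)
    (y0 : EuclideanSpace ℝ (Fin d)) (yh : ℕ → EuclideanSpace ℝ (Fin d))
    (h0 : yh 0 = y0)
    (hstep : ∀ k : ℕ,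
      Relation.ReflTransGen (ACSAReachable A lam Lt y0 yh k) (yh k) (yh (k + 1))) :
    ∀ k : ℕ, yh k - y0 ∈ (LinearMap.ker (LinearMap.adjoint A))ᗮ := by
  intro k
  induction k using Nat.strong_induction_on with
  | _ k ih =>
    cases k with
    | zero => rw [h0, sub_self]; exact Submodule.zero_mem _
    | succ k =>
      exact ACSAReachable.sub_mem_of_reflTransGen hlam hLt A.mem_orthogonal_ker_adjoint
        (fun l hl => ih l (Nat.lt_succ_of_le (mem_Icc.mp hl).2)) (hstep k) (ih k k.lt_succ_self)
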